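/- Let G be a weak framework for a matroid M. If F is a forest of G (a subgraph with no cycles and no loop-edges), then E(F) is an independent set of M. -/

import Mathlib

open Set Matroid
open scoped Classical

namespace QuasiGraphicPaper

universe u v

/-- A finite multigraph: a set `V` of vertices (in an ambient type `α`), a set `E` of
edges (in an ambient type `β`), and an incidence function assigning to each edge an
unordered pair of endpoints; loop-edges and parallel edges are allowed. -/
structure Graph (α : Type u) (β : Type v) where
  V : Set α
  E : Set β
  ends : β → Sym2 α
  finV : V.Finite
  finE : E.Finite
  ends_mem : ∀ ⦃e⦄, e ∈ E → ∀ ⦃x⦄, x ∈ ends e → x ∈ V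

namespace Graph

variable {α : Type u} {β : Type v}

/-- `e` is a loop-edge of `G` at the vertex `v`. -/
def IsLoopAt (G : Graph α β) (e : β) (v : α) : Prop :=
  e ∈ G.E ∧ G.ends e = Sym2.diag v

/-- `loops_G(v)`: the set of loop-edges of `G` at `v`. -/
def loopsAt (G : Graph α β) (v : α) : Set β := {e | G.IsLoopAt e v}

/-- Two vertices are adjacent if some edge of `G` has them as its two endpoints. -/
def Adj (G : Graph α β) (u v : α) : Prop := ∃ e ∈ G.E, G.ends e = s(u, v)

/-- A graph is connected if any two of its vertices are joined by a walk.
(The graph with no vertices is connected.) -/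
def Connected (G : Graph α β) : Prop :=
  ∀ u ∈ G.V, ∀ v ∈ G.V, Relation.ReflTransGen G.Adj u v

/-- Delete a set `X` of vertices: remove the vertices in `X` and all edges meeting `X`. -/
def deleteVertices (G : Graph α β) (X : Set α) : Graph α β where
  V := G.V \ X
  E := {e ∈ G.E | ∀ x ∈ G.ends e, x ∉ X}
  ends := G.ends
  finV := G.finV.sdiff (t := X)
  finE := G.finE.subset (sep_subset _ _)
  ends_mem := fun e he x hx => ⟨G.ends_mem he.1 hx, he.2 x hx⟩

/-- `G − v`: delete the single vertex `v`. -/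
abbrev deleteVertex (G : Graph α β) (v : α) : Graph α β := G.deleteVertices {v}

/-- `G − e`: delete the edge `e` (keeping all vertices). -/
def deleteEdge (G : Graph α β) (e : β) : Graph α β where
  V := G.V
  E := G.E \ {e}
  ends := G.ends
  finV := G.finV
  finE := G.finE.sdiff
  ends_mem := fun f hf x hx => G.ends_mem hf.1 hx

/-- `G[X]`: the subgraph of `G` with edge set `X` (intersected with `E(G)`) and
no isolated vertices. -/
def restrictEdges (G : Graph α β) (X : Set β) : Graph α β where
  V := {v | ∃ e ∈ X ∩ G.E, v ∈ G.ends e}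
  E := X ∩ G.E
  ends := G.ends
  finV := G.finV.subset (by rintro v ⟨e, ⟨-, he⟩, hv⟩; exact G.ends_mem he hv)
  finE := G.finE.subset inter_subset_right
  ends_mem := fun e he x hx => ⟨e, he, hx⟩

/-- The connected component of `G` containing the vertex `v`, as a graph. -/
def componentOf (G : Graph α β) (v : α) : Graph α β where
  V := {u ∈ G.V | Relation.ReflTransGen G.Adj v u}
  E := {e ∈ G.E | ∀ x ∈ G.ends e, Relation.ReflTransGen G.Adj v x}
  ends := G.ends
  finV := G.finV.subset (sep_subset _ _)
  finE := G.finE.subset (sep_subset _ _)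
  ends_mem := fun e he x hx => ⟨G.ends_mem he.1 hx, he.2 x hx⟩

/-- `H` is a connected component of `G`. -/
def IsComponentOf (H G : Graph α β) : Prop := ∃ v ∈ G.V, H = G.componentOf v

/-- The number of connected components of `G`. -/
noncomputable def ncomponents (G : Graph α β) : ℕ :=
  {H : Graph α β | H.IsComponentOf G}.ncard

/-- `G` has at most two connected components: among any three vertices, two are joined. -/
def AtMostTwoComponents (G : Graph α β) : Prop :=
  ∀ u ∈ G.V, ∀ v ∈ G.V, ∀ w ∈ G.V,
    Relation.ReflTransGen G.Adj u v ∨ Relation.ReflTransGen G.Adj u w ∨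
      Relation.ReflTransGen G.Adj v w

/-- The degree of a vertex: loop-edges count twice. -/
noncomputable def degree (G : Graph α β) (v : α) : ℕ :=
  ({e ∈ G.E | v ∈ G.ends e ∧ ¬ (G.ends e).IsDiag}).ncard +
    2 * ({e ∈ G.E | G.ends e = Sym2.diag v}).ncard

/-- `G` is a cycle: it is connected, has at least one edge, and every vertex has
degree two. -/
def IsCycleGraph (G : Graph α β) : Prop :=
  G.E.Nonempty ∧ G.Connected ∧ ∀ v ∈ G.V, G.degree v = 2

/-- `C` is (the edge set of) a cycle of `G`. -/
def CycleSet (G : Graph α β) (C : Set β) : Prop :=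
  C ⊆ G.E ∧ (G.restrictEdges C).IsCycleGraph

/-- A forest: a graph with no cycles (in particular no loop-edges). -/
def IsForest (G : Graph α β) : Prop := ∀ C, ¬ G.CycleSet C

/-- `H` is a subgraph of `G`. -/
def IsSubgraph (H G : Graph α β) : Prop := H.V ⊆ G.V ∧ H.E ⊆ G.E ∧ H.ends = G.ends

/-- `G` is `k`-connected if `G − X` is connected for every vertex set `X` with `|X| < k`. -/
def KConnected (G : Graph α β) (k : ℕ) : Prop :=
  ∀ X : Set α, X.encard < k → (G.deleteVertices X).Connected

/-- A theta: a `2`-connected graph with exactly two vertices of degree three, all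
other vertices having degree two. -/
def IsTheta (H : Graph α β) : Prop :=
  H.KConnected 2 ∧
    ∃ a ∈ H.V, ∃ b ∈ H.V, a ≠ b ∧ H.degree a = 3 ∧ H.degree b = 3 ∧
      ∀ v ∈ H.V, v ≠ a → v ≠ b → H.degree v = 2

/-- `G / e`: contract the non-loop edge `e` with endpoints `x` and `y`
(identifying `y` with `x` and deleting `e`). -/
noncomputable def contractEdge (G : Graph α β) (e : β) (x y : α) (he : e ∈ G.E)
    (hxy : G.ends e = s(x, y)) (hne : x ≠ y) : Graph α β where
  V := G.V \ {y}
  E := G.E \ {e}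
  ends := fun f => (G.ends f).map (fun w => if w = y then x else w)
  finV := G.finV.sdiff
  finE := G.finE.sdiff
  ends_mem := by
    rintro f ⟨hf, -⟩ z hz
    rw [Sym2.mem_map] at hz
    obtain ⟨w, hw, rfl⟩ := hz
    by_cases hwy : w = y
    · rw [if_pos hwy]
      have hx : x ∈ G.ends e := by rw [hxy]; exact Sym2.mem_mk_left x y
      exact ⟨G.ends_mem he hx, by simp [hne]⟩
    · rw [if_neg hwy]
      exact ⟨G.ends_mem hf hw, by simp [hwy]⟩

/-- `G ∘ e`: for a loop-edge `e` at a vertex `v` which is the unique loop-edge at `v`,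
delete `v` and `e`, and replace every other edge `f = vw` at `v` by a loop-edge at `w`. -/
noncomputable def circ (G : Graph α β) (e : β) (v : α)
    (hno : ∀ f ∈ G.E, G.ends f = Sym2.diag v → f = e) : Graph α β where
  V := G.V \ {v}
  E := G.E \ {e}
  ends := fun f =>
    if h : f ∈ G.E ∧ f ≠ e ∧ v ∈ G.ends f then Sym2.diag (Sym2.Mem.other h.2.2)
    else G.ends f
  finV := G.finV.sdiff
  finE := G.finE.sdiff
  ends_mem := by
    rintro f ⟨hf, hfe⟩ z hz
    have hfe' : f ≠ e := fun h' => hfe (by simp [h'])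
    by_cases h : f ∈ G.E ∧ f ≠ e ∧ v ∈ G.ends f
    · rw [dif_pos h] at hz
      have hze : z = Sym2.Mem.other h.2.2 := by
        have h2 : z ∈ s(Sym2.Mem.other h.2.2, Sym2.Mem.other h.2.2) := hz
        rw [Sym2.mem_iff] at h2
        tauto
      subst hze
      refine ⟨G.ends_mem hf (Sym2.other_mem h.2.2), ?_⟩
      simp only [mem_singleton_iff]
      intro hzv
      apply h.2.1
      apply hno f hf
      show G.ends f = s(v, v)
      rw [← Sym2.other_spec h.2.2, hzv]
    · rw [dif_neg h] at hz
      refine ⟨G.ends_mem hf hz, ?_⟩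
      simp only [mem_singleton_iff]
      intro hzv
      subst hzv
      exact h ⟨hf, hfe', hz⟩

end Graph

/-! ### Matroid notions -/

variable {α : Type u} {β : Type v}

/-- The rank `r_M(X)` of a set `X` in a matroid `M`: the maximum size of an
independent subset of `X`. -/
noncomputable def rank (M : Matroid β) (X : Set β) : ℕ :=
  (⨆ I ∈ {I : Set β | M.Indep I ∧ I ⊆ X}, I.encard).toNat

/-- `C` is a circuit of `M` : a minimal dependent set. -/
def IsCircuit (M : Matroid β) (C : Set β) : Prop :=
  M.Dep C ∧ ∀ D, D ⊂ C → M.Indep D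

/-- `M \ D` : delete the set `D` from the matroid `M`. -/
def deleteM (M : Matroid β) (D : Set β) : Matroid β := M ↾ (M.E \ D)

/-- `M / C` : contract the set `C` in the matroid `M`. -/
def contractM (M : Matroid β) (C : Set β) : Matroid β := (M✶ ↾ (M✶.E \ C))✶

/-- `G` is a weak framework for `M`: conditions (1)–(3). -/
def WeakFramework (G : Graph α β) (M : Matroid β) : Prop :=
  G.E = M.E ∧
  (∀ H : Graph α β, H.IsComponentOf G → rank M H.E ≤ H.V.ncard) ∧
  (∀ v ∈ G.V,
    M.closure (G.deleteVertex v).E ⊆ (G.deleteVertex v).E ∪ G.loopsAt v)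

/-- `G` is a framework for `M`: conditions (1)–(4). -/
def Framework (G : Graph α β) (M : Matroid β) : Prop :=
  WeakFramework G M ∧
    ∀ C, IsCircuit M C → (G.restrictEdges C).AtMostTwoComponents

/-- `M` is the cycle matroid `M(G)` of `G` : the ground set of `M` is `E(G)`, and the
circuits of `M` are exactly the edge sets of cycles of `G`. -/
def IsCycleMatroidOf (G : Graph α β) (M : Matroid β) : Prop :=
  M.E = G.E ∧ ∀ C, IsCircuit M C ↔ G.CycleSet C

/-- A matroid is graphic if it is the cycle matroid of some graph. -/
def Graphic (M : Matroid β) : Prop :=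
  ∃ (γ : Type v) (G : Graph γ β), IsCycleMatroidOf G M

/-- A matroid is quasi-graphic if it has a framework. -/
def QuasiGraphic (M : Matroid β) : Prop :=
  ∃ (γ : Type v) (G : Graph γ β), Framework G M

/-- `M` is a lift of `N` if some single-element extension `M'` of `M` satisfies
`M' \ e = M` and `M' / e = N`. -/
def IsLiftOf (M N : Matroid β) : Prop :=
  ∃ M' : Matroid (Option β), (none : Option β) ∈ M'.E ∧
    deleteM M' {none} = M.map some (Option.some_injective β).injOn ∧
    contractM M' {none} = N.map some (Option.some_injective β).injOn

/-- `M` is a lifted-graphic matroid: for some single-element extension `M'` of `M`,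
`M' / e` is graphic. -/
def LiftedGraphic (M : Matroid β) : Prop :=
  ∃ M' : Matroid (Option β), (none : Option β) ∈ M'.E ∧
    deleteM M' {none} = M.map some (Option.some_injective β).injOn ∧
    Graphic (contractM M' {none})

/-- `(M, V)` is a framed matroid: `V` is a basis of `M` and every element of `M` is
spanned by a subset of `V` with at most two elements. -/
def FramedMatroid {γ : Type u} (M : Matroid γ) (V : Set γ) : Prop :=
  M.IsBase V ∧ ∀ e ∈ M.E, ∃ S ⊆ V, S.ncard ≤ 2 ∧ e ∈ M.closure S

/-- `M` is a frame matroid: `M = M' \ V` for some framed matroid `(M', V)`. -/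
def FrameMatroid (M : Matroid β) : Prop :=
  ∃ (γ : Type v) (M' : Matroid (β ⊕ γ)) (V : Set (β ⊕ γ)),
    FramedMatroid M' V ∧
      deleteM M' V = M.map Sum.inl Sum.inl_injective.injOn

/-- `M` is `3`-connected: it has no `k`-separation for `k ≤ 2`. -/
def ThreeConnected (M : Matroid β) : Prop :=
  ∀ X ⊆ M.E, ∀ k : ℕ, k ≤ 2 → (k : ℕ∞) ≤ X.encard → (k : ℕ∞) ≤ (M.E \ X).encard →
    rank M M.E + k ≤ rank M X + rank M (M.E \ X)

/-- `M` is representable over some field. -/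
def Representable (M : Matroid β) : Prop :=
  ∃ (F : Type v) (_ : Field F) (W : Type v) (_ : AddCommGroup W) (_ : Module F W)
    (φ : β → W), ∀ I ⊆ M.E, (M.Indep I ↔ LinearIndependent F (fun x : I => φ x))

/-- A collection `B` of cycles of `G` satisfies the theta-property if there is no
theta-subgraph of `G` with exactly two of its three cycles in `B`. -/
def ThetaProperty (G : Graph α β) (B : Set (Set β)) : Prop :=
  ∀ H : Graph α β, H.IsSubgraph G → H.IsTheta →
    ∀ C1 C2 C3, H.CycleSet C1 → H.CycleSet C2 → H.CycleSet C3 →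
      C1 ≠ C2 → C2 ≠ C3 → C1 ≠ C3 → C1 ∈ B → C2 ∈ B → C3 ∈ B

/-!
If `E(F)` were dependent it would contain a circuit `C`. As `C` spans a loopless forest, some
vertex `u` meets exactly one edge `x` of `C`, and `x` is not a loop. Then `C - x` avoids `u`, so
`x ∈ cl(C - x) ⊆ cl(E(G - u)) ⊆ E(G - u) ∪ loops_G(u)` by condition (3), which is absurd for a
non-loop edge at `u`. The pendant edge exists because otherwise a non-backtracking walk inside
`C` could be continued forever, and the segment up to its first repeated vertex is a cycle of `F`.
-/

namespace Graph

instance instSymmAdj (G : Graph α β) : Std.Symm G.Adj where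
  symm _ _ := fun ⟨e, he, hends⟩ => ⟨e, he, hends.trans Sym2.eq_swap⟩

variable {G : Graph α β}

section ClosedPath

variable {n : ℕ} {w : Fin (n + 2) → α} {g : Fin (n + 2) → β}

lemma mem_ends_iff_of_closedPath (hw : Function.Injective w)
    (hends : ∀ i, G.ends (g i) = s(w i, w (i + 1))) {i k : Fin (n + 2)} :
    w i ∈ G.ends (g k) ↔ k = i ∨ k = i - 1 := by
  rw [hends, Sym2.mem_iff, hw.eq_iff, hw.eq_iff, eq_sub_iff_add_eq, eq_comm (a := i),
    eq_comm (a := i)]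

lemma not_isDiag_of_closedPath (hw : Function.Injective w)
    (hends : ∀ i, G.ends (g i) = s(w i, w (i + 1))) (k : Fin (n + 2)) :
    ¬ (G.ends (g k)).IsDiag := by
  rw [hends, Sym2.mk_isDiag_iff, hw.eq_iff, left_eq_add]
  exact one_ne_zero

lemma injective_of_closedPath (hw : Function.Injective w)
    (hends : ∀ i, G.ends (g i) = s(w i, w (i + 1))) (hg : g 1 ≠ g 0) :
    Function.Injective g := by
  intro i k hik
  have := congrArg G.ends hik
  rw [hends, hends, Sym2.eq_iff] at this
  simp only [hw.eq_iff] at this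
  rcases this with ⟨rfl, -⟩ | ⟨rfl, hk⟩
  · rfl
  · -- `i = k + 1` and `k = i + 1` can only happen in a cycle of length two
    rcases n with _ | n
    · fin_cases k <;> simp_all [eq_comm]
    · rw [add_assoc k, add_eq_left] at hk
      simp [Fin.ext_iff, Fin.val_add, Nat.mod_eq_of_lt (show 2 < n + 1 + 2 by omega)] at hk

lemma cycleSet_range_of_closedPath (hw : Function.Injective w) (hgE : ∀ i, g i ∈ G.E)
    (hends : ∀ i, G.ends (g i) = s(w i, w (i + 1))) (hg : g 1 ≠ g 0) :
    G.CycleSet (range g) := by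
  have hE : (G.restrictEdges (range g)).E = range g := inter_eq_left.2 (range_subset_iff.2 hgE)
  have hV : ∀ u ∈ (G.restrictEdges (range g)).V, ∃ i, u = w i := by
    rintro u ⟨_, ⟨⟨k, rfl⟩, -⟩, hu⟩
    rw [hends, Sym2.mem_iff] at hu
    rcases hu with rfl | rfl <;> exact ⟨_, rfl⟩
  refine ⟨range_subset_iff.2 hgE, ⟨g 0, by rw [hE]; exact mem_range_self 0⟩, ?_, ?_⟩
  · have hreach : ∀ i, Relation.ReflTransGen (G.restrictEdges (range g)).Adj (w 0) (w i) := by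
      intro i
      induction i using Fin.induction with
      | zero => rfl
      | succ i ih =>
        rw [← Fin.coeSucc_eq_succ]
        exact ih.tail ⟨g i.castSucc, ⟨mem_range_self _, hgE _⟩, hends _⟩
    intro u hu u' hu'
    obtain ⟨i, rfl⟩ := hV u hu
    obtain ⟨i', rfl⟩ := hV u' hu'
    exact (Std.Symm.symm _ _ (hreach i)).trans (hreach i')
  · intro u hu
    obtain ⟨i, rfl⟩ := hV u hu
    have hloops : {e ∈ (G.restrictEdges (range g)).E | G.ends e = Sym2.diag (w i)} = ∅ := by
      rw [hE, sep_eq_empty_iff_mem_false]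
      rintro _ ⟨k, rfl⟩ hk
      exact not_isDiag_of_closedPath hw hends k (hk ▸ Sym2.diag_isDiag _)
    have hinc : {e ∈ (G.restrictEdges (range g)).E | w i ∈ G.ends e ∧ ¬ (G.ends e).IsDiag} =
        {g i, g (i - 1)} := by
      ext e
      rw [hE]
      simp only [mem_range, mem_insert_iff, mem_singleton_iff]
      constructor
      · rintro ⟨⟨k, rfl⟩, hk, -⟩
        rcases (mem_ends_iff_of_closedPath hw hends).1 hk with rfl | rfl <;> simp
      · rintro (rfl | rfl) <;>
          exact ⟨⟨_, rfl⟩, (mem_ends_iff_of_closedPath hw hends).2 (by simp),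
            not_isDiag_of_closedPath hw hends _⟩
    have hne : g i ≠ g (i - 1) :=
      (injective_of_closedPath hw hends hg).ne fun h => one_ne_zero (sub_eq_self.1 h.symm)
    change ncard {e ∈ _ | w i ∈ G.ends e ∧ ¬ (G.ends e).IsDiag} +
      2 * ncard {e ∈ _ | G.ends e = Sym2.diag (w i)} = 2
    rw [hinc, hloops, ncard_pair hne, ncard_empty]

end ClosedPath

lemma exists_walk_of_forall_exists_ne_mem_ends {C : Set β} (hne : C.Nonempty)
    (hdeg : ∀ e ∈ C, ∀ u ∈ G.ends e, ∃ f ∈ C, f ≠ e ∧ u ∈ G.ends f) :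
    ∃ (x : ℕ → α) (f : ℕ → β),
      ∀ k, f k ∈ C ∧ G.ends (f k) = s(x k, x (k + 1)) ∧ f (k + 1) ≠ f k := by
  -- a state is an edge of `C` together with the end at which the walk currently stands
  have hstep : ∀ p : {p : β × α // p.1 ∈ C ∧ p.2 ∈ G.ends p.1},
      ∃ q : {p : β × α // p.1 ∈ C ∧ p.2 ∈ G.ends p.1},
        q.1.1 ≠ p.1.1 ∧ G.ends q.1.1 = s(p.1.2, q.1.2) := by
    rintro ⟨⟨e, u⟩, he, hu⟩
    obtain ⟨f, hf, hfe, huf⟩ := hdeg e he u hu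
    exact ⟨⟨(f, Sym2.Mem.other huf), hf, Sym2.other_mem huf⟩, hfe, (Sym2.other_spec huf).symm⟩
  choose next hnext using hstep
  obtain ⟨e₀, he₀⟩ := hne
  let p (k : ℕ) := next^[k] ⟨(e₀, (G.ends e₀).out.1), he₀, Sym2.out_fst_mem _⟩
  refine ⟨fun k => (p k).1.2, fun k => (p (k + 1)).1.1, fun k => ?_⟩
  simp only [p, Function.iterate_succ_apply']
  exact ⟨(next _).2.1, (hnext _).2, (hnext _).1⟩

lemma exists_closedPath_of_walk (hnl : ∀ e v, ¬ G.IsLoopAt e v) {C : Set β} (hC : C ⊆ G.E)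
    {x : ℕ → α} {f : ℕ → β}
    (hwalk : ∀ k, f k ∈ C ∧ G.ends (f k) = s(x k, x (k + 1)) ∧ f (k + 1) ≠ f k) :
    ∃ (n : ℕ) (w : Fin (n + 2) → α) (g : Fin (n + 2) → β), Function.Injective w ∧
      (∀ i, g i ∈ C) ∧ (∀ i, G.ends (g i) = s(w i, w (i + 1))) ∧ g 1 ≠ g 0 := by
  have hxV (k : ℕ) : x k ∈ G.V :=
    G.ends_mem (hC (hwalk k).1) (by rw [(hwalk k).2.1]; exact Sym2.mem_mk_left _ _)
  have hrep : ∃ k, ∃ j < k, x j = x k := by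
    obtain ⟨j, k, hjk, hx⟩ := G.finV.exists_lt_map_eq_of_forall_mem hxV
    exact ⟨k, j, hjk, hx⟩
  -- the cycle is the stretch of the walk up to its first repeated vertex
  obtain ⟨j, hjk, hjx⟩ := Nat.find_spec hrep
  set k := Nat.find hrep
  have hinj : ∀ a < k, ∀ b < k, x a = x b → a = b := by
    intro a ha b hb hab
    by_contra hne
    rcases lt_or_gt_of_ne hne with h | h
    · exact Nat.find_min hrep hb ⟨a, h, hab⟩
    · exact Nat.find_min hrep ha ⟨b, h, hab.symm⟩
  obtain ⟨n, hn⟩ : ∃ n, k = j + n + 2 := by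
    have : k ≠ j + 1 := fun hk =>
      hnl (f j) (x j) ⟨hC (hwalk j).1, by rw [(hwalk j).2.1, ← hk, hjx]; rfl⟩
    exact ⟨k - j - 2, by omega⟩
  refine ⟨n, fun i => x (j + i), fun i => f (j + i), fun a b hab => ?_,
    fun i => (hwalk _).1, fun i => ?_, by simpa using (hwalk j).2.2⟩
  · exact Fin.ext (by have := hinj (j + a) (by omega) (j + b) (by omega) hab; omega)
  · simp only [(hwalk _).2.1, Fin.val_add_one]
    split_ifs with hi
    · rw [hi, Fin.val_last, add_zero, hjx, hn]
      rfl
    · rfl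

lemma exists_cycleSet_of_forall_exists_ne_mem_ends (hnl : ∀ e v, ¬ G.IsLoopAt e v)
    {C : Set β} (hC : C ⊆ G.E) (hne : C.Nonempty)
    (hdeg : ∀ e ∈ C, ∀ u ∈ G.ends e, ∃ f ∈ C, f ≠ e ∧ u ∈ G.ends f) :
    ∃ D ⊆ C, G.CycleSet D := by
  obtain ⟨x, f, hwalk⟩ := exists_walk_of_forall_exists_ne_mem_ends hne hdeg
  obtain ⟨n, w, g, hw, hgC, hends, hg⟩ := exists_closedPath_of_walk hnl hC hwalk
  exact ⟨range g, range_subset_iff.2 hgC,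
    cycleSet_range_of_closedPath hw (fun i => hC (hgC i)) hends hg⟩

lemma IsForest.exists_pendant (hF : G.IsForest) (hnl : ∀ e v, ¬ G.IsLoopAt e v) {C : Set β}
    (hC : C ⊆ G.E) (hne : C.Nonempty) :
    ∃ x ∈ C, ∃ u ∈ G.ends x, ∀ f ∈ C, u ∈ G.ends f → f = x := by
  by_contra! h
  obtain ⟨D, -, hD⟩ := exists_cycleSet_of_forall_exists_ne_mem_ends hnl hC hne
    fun e he u hu => by
      obtain ⟨f, hf, huf, hfe⟩ := h e he u hu
      exact ⟨f, hf, hfe, huf⟩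
  exact hF D hD

end Graph

lemma WeakFramework.exists_mem_ends_of_isCircuit {G : Graph α β} {M : Matroid β}
    (h : WeakFramework G M) {C : Set β} (hC : M.IsCircuit C) {x : β} (hx : x ∈ C) {u : α}
    (hu : u ∈ G.ends x) (hxu : ¬ G.IsLoopAt x u) : ∃ f ∈ C, f ≠ x ∧ u ∈ G.ends f := by
  by_contra! hno
  have hxG : x ∈ G.E := h.1 ▸ hC.subset_ground hx
  have hsub : C \ {x} ⊆ (G.deleteVertex u).E := fun f ⟨hf, hfx⟩ =>
    ⟨h.1 ▸ hC.subset_ground hf, fun z hz hzu => hno f hf hfx (mem_singleton_iff.1 hzu ▸ hz)⟩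
  rcases h.2.2 u (G.ends_mem hxG hu)
      (M.closure_subset_closure hsub (hC.mem_closure_sdiff_singleton_of_mem hx)) with hx' | hx'
  · exact hx'.2 u hu rfl
  · exact hxu hx'

/-- Let `G` be a weak framework for a matroid `M`. If `F` is a forest of
`G` (a subgraph with no cycles and no loop-edges), then `E(F)` is an independent set
of `M`. -/
theorem statement8 {α : Type u} {β : Type v} (G F : Graph α β) (M : Matroid β)
    (h : WeakFramework G M) (hsub : F.IsSubgraph G) (hforest : F.IsForest)
    (hnoloop : ∀ e v, ¬ F.IsLoopAt e v) :
    M.Indep F.E := by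
  by_contra hdep
  obtain ⟨C, hCF, hC⟩ := ((not_indep_iff (h.1 ▸ hsub.2.1)).1 hdep).exists_isCircuit_subset
  obtain ⟨x, hxC, u, hux, hpendant⟩ := hforest.exists_pendant hnoloop hCF hC.nonempty
  rw [hsub.2.2] at hux hpendant
  obtain ⟨f, hfC, hfx, huf⟩ := h.exists_mem_ends_of_isCircuit hC hxC hux
    fun hloop => hnoloop x u ⟨hCF hxC, hsub.2.2 ▸ hloop.2⟩
  exact hfx (hpendant f hfC huf)

end QuasiGraphicPaper
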